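/- Let d ≥ 1, κ > 0, ε > 0, and let T > 0 be the unique time with sinh(κT) = εκ/4, i.e. T = (1/κ)·log( εκ/4 + √(ε²κ²/16 + 1) ). Let 𝔪 be the centered Gaussian measure on ℝ^d with covariance κ^{-1}·Id (density (κ/(2π))^{d/2} e^{−κ|x|²/2} with respect to Lebesgue measure), and let R_T be the measure on ℝ^d × ℝ^d with density p_T(x,y) = (1 − e^{−2κT})^{−d/2} · exp( −κ·(|x|² − 2e^{κT} x·y + |y|²) / (2(e^{2κT} − 1)) ) with respect to 𝔪 ⊗ 𝔪. Then for all probability measures μ, ν on ℝ^d with finite second moments and H(μ|𝔪), H(ν|𝔪) < ∞, and for every coupling π ∈ Π(μ,ν) with H(π | μ⊗ν) < ∞, it holds that ∫ |x−y|² dπ + ε·H(π | μ⊗ν) = ε·H(π | R_T) − ε·H(μ|𝔪) − ε·H(ν|𝔪) − (dε/2)·log(1 − e^{−2κT}) + (1 − e^{−κT})·(M₂(μ) + M₂(ν)). -/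

import Mathlib

/-!
Write `R = p · (𝔪 ⊗ 𝔪)` and `μ ⊗ ν = (dμ/d𝔪 ⊗ dν/d𝔪) · (𝔪 ⊗ 𝔪)`. The chain rule for
Radon–Nikodym derivatives along `π ≪ μ ⊗ ν ≪ 𝔪 ⊗ 𝔪 ≪ R` gives
`H(π|R) = H(π|μ⊗ν) + H(μ|𝔪) + H(ν|𝔪) - ∫ log p dπ`. Up to the constant
`-(d/2) log(1 - e^{-2κT})`, `log p` is `-κ/(2(e^{2κT}-1))` times
`q(x,y) = |x|² - 2e^{κT}⟨x,y⟩ + |y|²`, and `sinh(κT) = εκ/4` is exactly what makes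
`εκ/(2(e^{2κT}-1)) = e^{-κT}`. Hence `|x-y|² = ε · κ q/(2(e^{2κT}-1)) + (1-e^{-κT})(|x|²+|y|²)`,
and integrating against `π`, whose marginals are `μ` and `ν`, gives the identity.
-/

open MeasureTheory

/-- The centered Gaussian measure on `ℝ^d` with covariance `κ⁻¹·Id`, i.e. the
invariant measure of the Ornstein–Uhlenbeck process, with density
`(κ/(2π))^{d/2} e^{-κ|x|²/2}` with respect to Lebesgue measure. -/
noncomputable def ouInvariantMeasure (d : ℕ) (κ : ℝ) :
    Measure (EuclideanSpace ℝ (Fin d)) :=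
  (volume : Measure (EuclideanSpace ℝ (Fin d))).withDensity
    fun x => ENNReal.ofReal
      ((κ / (2 * Real.pi)) ^ ((d : ℝ) / 2) * Real.exp (-κ * ‖x‖ ^ 2 / 2))

/-- The joint law `R_{0,T}` at times `0` and `T` of the stationary
Ornstein–Uhlenbeck process, given by the transition kernel
`p_T(x,y) = (1-e^{-2κT})^{-d/2} exp(-κ(|x|² - 2e^{κT} x·y + |y|²)/(2(e^{2κT}-1)))`
with respect to `𝔪 ⊗ 𝔪`. -/
noncomputable def ouRefMeasure (d : ℕ) (κ T : ℝ) :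
    Measure (EuclideanSpace ℝ (Fin d) × EuclideanSpace ℝ (Fin d)) :=
  ((ouInvariantMeasure d κ).prod (ouInvariantMeasure d κ)).withDensity
    fun z => ENNReal.ofReal
      ((1 - Real.exp (-2 * κ * T)) ^ (-(d : ℝ) / 2) *
        Real.exp (-κ * (‖z.1‖ ^ 2 - 2 * Real.exp (κ * T) * (inner ℝ z.1 z.2 : ℝ) + ‖z.2‖ ^ 2)
          / (2 * (Real.exp (2 * κ * T) - 1))))

open ENNReal

namespace MeasureTheory

variable {α β : Type*} {mα : MeasurableSpace α} {mβ : MeasurableSpace β}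

lemma MeasurePreserving.integral_comp_of_aestronglyMeasurable {μ : Measure α} {ν : Measure β}
    {f : α → β} (hf : MeasurePreserving f μ ν) {g : β → ℝ} (hg : AEStronglyMeasurable g ν) :
    ∫ x, g (f x) ∂μ = ∫ y, g y ∂ν := by
  rw [← hf.map_eq] at hg ⊢
  exact (integral_map hf.measurable.aemeasurable hg).symm

lemma llr_ae_eq_llr_add_llr {μ ν ρ : Measure α} [SigmaFinite μ] [SigmaFinite ν] [SigmaFinite ρ]
    (hμν : μ ≪ ν) (hνρ : ν ≪ ρ) : llr μ ρ =ᵐ[μ] llr μ ν + llr ν ρ := by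
  have hμρ := hμν.trans hνρ
  filter_upwards [hμρ.ae_le (Measure.rnDeriv_mul_rnDeriv hμν), Measure.rnDeriv_pos hμν,
    hμν.ae_le (Measure.rnDeriv_ne_top μ ν), hμν.ae_le (Measure.rnDeriv_pos hνρ),
    hμρ.ae_le (Measure.rnDeriv_ne_top ν ρ)] with x hmul h₁ h₁' h₂ h₂'
  rw [Pi.add_apply, llr, llr, llr, ← hmul, Pi.mul_apply, toReal_mul,
    Real.log_mul (toReal_pos h₁.ne' h₁').ne' (toReal_pos h₂.ne' h₂').ne']

lemma llr_withDensity_ofReal_right (ν : Measure α) [SigmaFinite ν] {f : α → ℝ}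
    (hf : Measurable f) (hpos : ∀ x, 0 < f x) :
    llr ν (ν.withDensity fun x => ENNReal.ofReal (f x)) =ᵐ[ν] fun x => -Real.log (f x) := by
  filter_upwards [Measure.rnDeriv_withDensity_right ν ν hf.ennreal_ofReal.aemeasurable
      (ae_of_all _ fun x => by simpa using hpos x) (ae_of_all _ fun _ => ofReal_ne_top),
    Measure.rnDeriv_self ν] with x h hself
  rw [llr, h, hself, mul_one, toReal_inv, toReal_ofReal (hpos x).le, Real.log_inv]

lemma rnDeriv_prod_ae_eq {μ m₁ : Measure α} {ν m₂ : Measure β} [SigmaFinite μ] [SigmaFinite m₁]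
    [SigmaFinite ν] [SigmaFinite m₂] (hμ : μ ≪ m₁) (hν : ν ≪ m₂) :
    (μ.prod ν).rnDeriv (m₁.prod m₂) =ᵐ[m₁.prod m₂]
      fun z => μ.rnDeriv m₁ z.1 * ν.rnDeriv m₂ z.2 := by
  conv_lhs => rw [← Measure.withDensity_rnDeriv_eq μ m₁ hμ,
    ← Measure.withDensity_rnDeriv_eq ν m₂ hν,
    prod_withDensity (Measure.measurable_rnDeriv _ _) (Measure.measurable_rnDeriv _ _)]
  exact Measure.rnDeriv_withDensity _ (by fun_prop)

lemma llr_prod_ae_eq {μ m₁ : Measure α} {ν m₂ : Measure β} [SigmaFinite μ] [SigmaFinite m₁]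
    [SigmaFinite ν] [SigmaFinite m₂] (hμ : μ ≪ m₁) (hν : ν ≪ m₂) :
    llr (μ.prod ν) (m₁.prod m₂) =ᵐ[μ.prod ν] fun z => llr μ m₁ z.1 + llr ν m₂ z.2 := by
  have h₁ : ∀ᵐ z ∂μ.prod ν, 0 < μ.rnDeriv m₁ z.1 ∧ μ.rnDeriv m₁ z.1 ≠ ∞ :=
    Measure.quasiMeasurePreserving_fst.ae
      ((Measure.rnDeriv_pos hμ).and (hμ.ae_le (Measure.rnDeriv_ne_top _ _)))
  have h₂ : ∀ᵐ z ∂μ.prod ν, 0 < ν.rnDeriv m₂ z.2 ∧ ν.rnDeriv m₂ z.2 ≠ ∞ :=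
    Measure.quasiMeasurePreserving_snd.ae
      ((Measure.rnDeriv_pos hν).and (hν.ae_le (Measure.rnDeriv_ne_top _ _)))
  filter_upwards [(hμ.prod hν).ae_le (rnDeriv_prod_ae_eq hμ hν), h₁, h₂] with z hz h₁ h₂
  rw [llr, hz, toReal_mul, Real.log_mul (toReal_pos h₁.1.ne' h₁.2).ne'
    (toReal_pos h₂.1.ne' h₂.2).ne']
  rfl

lemma llr_withDensity_prod_ae_eq {π : Measure (α × β)} {μ m₁ : Measure α} {ν m₂ : Measure β}
    [SigmaFinite π] [SigmaFinite μ] [SigmaFinite m₁] [SigmaFinite ν] [SigmaFinite m₂]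
    (hπ : π ≪ μ.prod ν) (hμ : μ ≪ m₁) (hν : ν ≪ m₂) {p : α × β → ℝ} (hp : Measurable p)
    (hpos : ∀ z, 0 < p z) :
    llr π ((m₁.prod m₂).withDensity fun z => ENNReal.ofReal (p z)) =ᵐ[π]
      fun z => llr π (μ.prod ν) z + llr μ m₁ z.1 + llr ν m₂ z.2 - Real.log (p z) := by
  have hmR : m₁.prod m₂ ≪ (m₁.prod m₂).withDensity fun z => ENNReal.ofReal (p z) :=
    withDensity_absolutelyContinuous' hp.ennreal_ofReal.aemeasurable
      (ae_of_all _ fun z => by simpa using hpos z)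
  have hμν := hμ.prod hν
  filter_upwards [llr_ae_eq_llr_add_llr hπ (hμν.trans hmR),
    hπ.ae_le (llr_ae_eq_llr_add_llr hμν hmR), hπ.ae_le (llr_prod_ae_eq hμ hν),
    (hπ.trans hμν).ae_le (llr_withDensity_ofReal_right _ hp hpos)] with z h₁ h₂ h₃ h₄
  simp only [Pi.add_apply] at h₁ h₂
  rw [h₁, h₂, h₃, h₄]
  ring

lemma integral_llr_withDensity_prod {π : Measure (α × β)} {μ m₁ : Measure α} {ν m₂ : Measure β}
    [SigmaFinite π] [SigmaFinite μ] [SigmaFinite m₁] [SigmaFinite ν] [SigmaFinite m₂]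
    (hπ₁ : π.map Prod.fst = μ) (hπ₂ : π.map Prod.snd = ν)
    (hπ : π ≪ μ.prod ν) (hμ : μ ≪ m₁) (hν : ν ≪ m₂) {p : α × β → ℝ} (hp : Measurable p)
    (hpos : ∀ z, 0 < p z) (hπint : Integrable (llr π (μ.prod ν)) π)
    (hμint : Integrable (llr μ m₁) μ) (hνint : Integrable (llr ν m₂) ν)
    (hpint : Integrable (fun z => Real.log (p z)) π) :
    ∫ z, llr π ((m₁.prod m₂).withDensity fun z => ENNReal.ofReal (p z)) z ∂π
      = ∫ z, llr π (μ.prod ν) z ∂π + ∫ x, llr μ m₁ x ∂μ + ∫ y, llr ν m₂ y ∂ν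
        - ∫ z, Real.log (p z) ∂π := by
  have hfst : MeasurePreserving Prod.fst π μ := ⟨measurable_fst, hπ₁⟩
  have hsnd : MeasurePreserving Prod.snd π ν := ⟨measurable_snd, hπ₂⟩
  have h₁ : Integrable (fun z => llr μ m₁ z.1) π := hfst.integrable_comp_of_integrable hμint
  have h₂ : Integrable (fun z => llr ν m₂ z.2) π := hsnd.integrable_comp_of_integrable hνint
  rw [integral_congr_ae (llr_withDensity_prod_ae_eq hπ hμ hν hp hpos),
    integral_sub (by exact (hπint.add h₁).add h₂) hpint, integral_add (by exact hπint.add h₁) h₂,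
    integral_add hπint h₁, hfst.integral_comp_of_aestronglyMeasurable hμint.1,
    hsnd.integral_comp_of_aestronglyMeasurable hνint.1]

end MeasureTheory

instance (d : ℕ) (κ : ℝ) : SigmaFinite (ouInvariantMeasure d κ) :=
  SigmaFinite.withDensity_ofReal _

lemma sinh_mul_eq_of_eq_log {κ ε T : ℝ} (hκ : κ ≠ 0)
    (hT : T = (1 / κ) * Real.log (ε * κ / 4 + Real.sqrt (ε ^ 2 * κ ^ 2 / 16 + 1))) :
    Real.sinh (κ * T) = ε * κ / 4 := by
  have harsinh : Real.log (ε * κ / 4 + Real.sqrt (ε ^ 2 * κ ^ 2 / 16 + 1))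
      = Real.arsinh (ε * κ / 4) := by
    rw [Real.arsinh]
    ring_nf
  rw [hT, ← mul_assoc, mul_one_div_cancel hκ, one_mul, harsinh, Real.sinh_arsinh]

lemma two_mul_sinh_div_exp_two_mul_sub_one {t : ℝ} (ht : t ≠ 0) :
    2 * Real.sinh t / (Real.exp (2 * t) - 1) = Real.exp (-t) := by
  have hsinh : Real.sinh t ≠ 0 := Real.sinh_ne_zero.2 ht
  have hexp : Real.exp (2 * t) - 1 = 2 * Real.exp t * Real.sinh t := by
    rw [Real.sinh_eq, two_mul, Real.exp_add, Real.exp_neg]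
    field_simp
  rw [hexp, Real.exp_neg]
  field_simp

section OrnsteinUhlenbeck

variable {E : Type*} [NormedAddCommGroup E] [InnerProductSpace ℝ E]

def ouQuadratic (s : ℝ) (z : E × E) : ℝ :=
  ‖z.1‖ ^ 2 - 2 * s * inner ℝ z.1 z.2 + ‖z.2‖ ^ 2

noncomputable def ouDensity (d : ℕ) (κ T : ℝ) (z : E × E) : ℝ :=
  (1 - Real.exp (-2 * κ * T)) ^ (-(d : ℝ) / 2) *
    Real.exp (-κ * ouQuadratic (Real.exp (κ * T)) z / (2 * (Real.exp (2 * κ * T) - 1)))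

lemma ouRefMeasure_eq_withDensity (d : ℕ) (κ T : ℝ) :
    ouRefMeasure d κ T = ((ouInvariantMeasure d κ).prod (ouInvariantMeasure d κ)).withDensity
      fun z => ENNReal.ofReal (ouDensity d κ T z) :=
  rfl

lemma one_sub_exp_neg_two_mul_pos {κ T : ℝ} (hκT : 0 < κ * T) :
    0 < 1 - Real.exp (-2 * κ * T) := by
  have : -2 * κ * T < 0 := by linarith
  linarith [Real.exp_lt_one_iff.2 this]

variable {d : ℕ} {κ T : ℝ}

lemma ouDensity_pos (hκT : 0 < κ * T) (z : E × E) : 0 < ouDensity d κ T z :=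
  mul_pos (Real.rpow_pos_of_pos (one_sub_exp_neg_two_mul_pos hκT) _) (Real.exp_pos _)

lemma continuous_ouDensity : Continuous (ouDensity (E := E) d κ T) := by
  unfold ouDensity ouQuadratic
  fun_prop

lemma log_ouDensity (hκT : 0 < κ * T) (z : E × E) :
    Real.log (ouDensity d κ T z) = -(d / 2) * Real.log (1 - Real.exp (-2 * κ * T))
      - κ / (2 * (Real.exp (2 * κ * T) - 1)) * ouQuadratic (Real.exp (κ * T)) z := by
  have hL := one_sub_exp_neg_two_mul_pos hκT
  rw [ouDensity, Real.log_mul (Real.rpow_pos_of_pos hL _).ne' (Real.exp_ne_zero _),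
    Real.log_rpow hL, Real.log_exp]
  ring

lemma norm_sub_sq_eq_ouQuadratic {s : ℝ} (hs : s ≠ 0) (z : E × E) :
    ‖z.1 - z.2‖ ^ 2 = s⁻¹ * ouQuadratic s z + (1 - s⁻¹) * (‖z.1‖ ^ 2 + ‖z.2‖ ^ 2) := by
  rw [norm_sub_sq_real, ouQuadratic]
  field_simp
  ring

variable [MeasurableSpace E] {π : Measure (E × E)}

lemma integrable_log_ouDensity [IsFiniteMeasure π] (hκT : 0 < κ * T)
    (hq : Integrable (ouQuadratic (Real.exp (κ * T))) π) :
    Integrable (fun z => Real.log (ouDensity d κ T z)) π := by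
  simp_rw [log_ouDensity hκT]
  exact (integrable_const _).sub (hq.const_mul _)

lemma integral_log_ouDensity [IsProbabilityMeasure π] (hκT : 0 < κ * T)
    (hq : Integrable (ouQuadratic (Real.exp (κ * T))) π) :
    ∫ z, Real.log (ouDensity d κ T z) ∂π = -(d / 2) * Real.log (1 - Real.exp (-2 * κ * T))
      - κ / (2 * (Real.exp (2 * κ * T) - 1)) * ∫ z, ouQuadratic (Real.exp (κ * T)) z ∂π := by
  simp_rw [log_ouDensity hκT]
  rw [integral_sub (integrable_const _) (hq.const_mul _), integral_const, integral_const_mul,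
    probReal_univ, one_smul]

variable [BorelSpace E] [SecondCountableTopology E]

lemma integrable_ouQuadratic (h₁ : Integrable (fun z => ‖z.1‖ ^ 2) π)
    (h₂ : Integrable (fun z => ‖z.2‖ ^ 2) π) (s : ℝ) : Integrable (ouQuadratic s) π := by
  have hinner : Integrable (fun z : E × E => (inner ℝ z.1 z.2 : ℝ)) π := by
    refine (h₁.add h₂).mono' continuous_inner.aestronglyMeasurable (ae_of_all _ fun z => ?_)
    have := norm_inner_le_norm (𝕜 := ℝ) z.1 z.2
    simp only [Pi.add_apply]
    nlinarith [sq_nonneg (‖z.1‖ - ‖z.2‖)]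
  exact (h₁.sub (hinner.const_mul (2 * s))).add h₂

lemma integral_norm_sub_sq_eq_ouQuadratic {μ ν : Measure E} (hπ₁ : π.map Prod.fst = μ)
    (hπ₂ : π.map Prod.snd = ν) (hμ : Integrable (fun x => ‖x‖ ^ 2) μ)
    (hν : Integrable (fun y => ‖y‖ ^ 2) ν) {s : ℝ} (hs : s ≠ 0) :
    ∫ z, ‖z.1 - z.2‖ ^ 2 ∂π
      = s⁻¹ * ∫ z, ouQuadratic s z ∂π + (1 - s⁻¹) * (∫ x, ‖x‖ ^ 2 ∂μ + ∫ y, ‖y‖ ^ 2 ∂ν) := by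
  have hfst : MeasurePreserving Prod.fst π μ := ⟨measurable_fst, hπ₁⟩
  have hsnd : MeasurePreserving Prod.snd π ν := ⟨measurable_snd, hπ₂⟩
  have h₁ : Integrable (fun z => ‖z.1‖ ^ 2) π := hfst.integrable_comp_of_integrable hμ
  have h₂ : Integrable (fun z => ‖z.2‖ ^ 2) π := hsnd.integrable_comp_of_integrable hν
  simp_rw [norm_sub_sq_eq_ouQuadratic hs]
  rw [integral_add ((integrable_ouQuadratic h₁ h₂ s).const_mul _)
      (by exact (h₁.add h₂).const_mul _),
    integral_const_mul, integral_const_mul, integral_add h₁ h₂,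
    hfst.integral_comp_of_aestronglyMeasurable hμ.1,
    hsnd.integral_comp_of_aestronglyMeasurable hν.1]

end OrnsteinUhlenbeck

theorem eot_ou_schroedinger_identity_general
    (d : ℕ) (κ ε T : ℝ) (hκ : 0 < κ) (hT0 : 0 < T)
    (hT : T = (1 / κ) * Real.log (ε * κ / 4 + Real.sqrt (ε ^ 2 * κ ^ 2 / 16 + 1)))
    (μ ν : Measure (EuclideanSpace ℝ (Fin d)))
    [IsProbabilityMeasure μ] [IsProbabilityMeasure ν]
    (hμ2 : Integrable (fun x => ‖x‖ ^ 2) μ)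
    (hν2 : Integrable (fun x => ‖x‖ ^ 2) ν)
    (hμac : μ ≪ ouInvariantMeasure d κ) (hνac : ν ≪ ouInvariantMeasure d κ)
    (hμent : Integrable (fun x => Real.log ((μ.rnDeriv (ouInvariantMeasure d κ) x).toReal)) μ)
    (hνent : Integrable (fun y => Real.log ((ν.rnDeriv (ouInvariantMeasure d κ) y).toReal)) ν)
    (π : Measure (EuclideanSpace ℝ (Fin d) × EuclideanSpace ℝ (Fin d)))
    [IsProbabilityMeasure π]
    (hπ1 : π.map Prod.fst = μ) (hπ2 : π.map Prod.snd = ν)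
    (hπac : π ≪ μ.prod ν)
    (hπent : Integrable (fun z => Real.log ((π.rnDeriv (μ.prod ν) z).toReal)) π) :
    (∫ z, ‖z.1 - z.2‖ ^ 2 ∂π)
        + ε * (∫ z, Real.log ((π.rnDeriv (μ.prod ν) z).toReal) ∂π)
      = ε * (∫ z, Real.log ((π.rnDeriv (ouRefMeasure d κ T) z).toReal) ∂π)
        - ε * (∫ x, Real.log ((μ.rnDeriv (ouInvariantMeasure d κ) x).toReal) ∂μ)
        - ε * (∫ y, Real.log ((ν.rnDeriv (ouInvariantMeasure d κ) y).toReal) ∂ν)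
        - ((d : ℝ) * ε / 2) * Real.log (1 - Real.exp (-2 * κ * T))
        + (1 - Real.exp (-κ * T)) * ((∫ x, ‖x‖ ^ 2 ∂μ) + ∫ y, ‖y‖ ^ 2 ∂ν) := by
  have hκT : 0 < κ * T := mul_pos hκ hT0
  have hq : Integrable (ouQuadratic (Real.exp (κ * T))) π :=
    integrable_ouQuadratic
      ((MeasurePreserving.mk measurable_fst hπ1).integrable_comp_of_integrable hμ2)
      ((MeasurePreserving.mk measurable_snd hπ2).integrable_comp_of_integrable hν2) _
  have hentropy := integral_llr_withDensity_prod hπ1 hπ2 hπac hμac hνac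
    (continuous_ouDensity (d := d)).measurable (ouDensity_pos hκT) hπent hμent hνent
    (integrable_log_ouDensity hκT hq)
  rw [← ouRefMeasure_eq_withDensity, integral_log_ouDensity hκT hq] at hentropy
  have hcoef : ε * (κ / (2 * (Real.exp (2 * κ * T) - 1))) = Real.exp (-κ * T) := by
    rw [show 2 * κ * T = 2 * (κ * T) by ring, neg_mul,
      ← two_mul_sinh_div_exp_two_mul_sub_one hκT.ne', sinh_mul_eq_of_eq_log hκ.ne' hT, ← div_div]
    ring
  rw [integral_norm_sub_sq_eq_ouQuadratic hπ1 hπ2 hμ2 hν2 (Real.exp_ne_zero (κ * T)),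
    ← Real.exp_neg, ← neg_mul]
  simp only [llr_def] at hentropy
  rw [hentropy, ← hcoef]
  ring

/-- identity linking quadratic entropic optimal transport on `ℝ^d`
with regularization `ε` and the Schrödinger problem with Ornstein–Uhlenbeck
reference measure `R_{0,T}`, where `sinh(κT) = εκ/4`:
`∫ |x-y|² dπ + ε·H(π|μ⊗ν) = ε·H(π|R_T) - ε·H(μ|𝔪) - ε·H(ν|𝔪)
  - (dε/2)·log(1-e^{-2κT}) + (1-e^{-κT})·(M₂(μ) + M₂(ν))`. -/
theorem eot_ou_schroedinger_identity
    (d : ℕ) (hd : 1 ≤ d) (κ ε T : ℝ) (hκ : 0 < κ) (hε : 0 < ε) (hT0 : 0 < T)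
    (hT : T = (1 / κ) * Real.log (ε * κ / 4 + Real.sqrt (ε ^ 2 * κ ^ 2 / 16 + 1)))
    (μ ν : Measure (EuclideanSpace ℝ (Fin d)))
    [IsProbabilityMeasure μ] [IsProbabilityMeasure ν]
    (hμ2 : Integrable (fun x => ‖x‖ ^ 2) μ)
    (hν2 : Integrable (fun x => ‖x‖ ^ 2) ν)
    (hμac : μ ≪ ouInvariantMeasure d κ) (hνac : ν ≪ ouInvariantMeasure d κ)
    (hμent : Integrable (fun x => Real.log ((μ.rnDeriv (ouInvariantMeasure d κ) x).toReal)) μ)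
    (hνent : Integrable (fun y => Real.log ((ν.rnDeriv (ouInvariantMeasure d κ) y).toReal)) ν)
    (π : Measure (EuclideanSpace ℝ (Fin d) × EuclideanSpace ℝ (Fin d)))
    [IsProbabilityMeasure π]
    (hπ1 : π.map Prod.fst = μ) (hπ2 : π.map Prod.snd = ν)
    (hπac : π ≪ μ.prod ν)
    (hπent : Integrable (fun z => Real.log ((π.rnDeriv (μ.prod ν) z).toReal)) π) :
    (∫ z, ‖z.1 - z.2‖ ^ 2 ∂π)
        + ε * (∫ z, Real.log ((π.rnDeriv (μ.prod ν) z).toReal) ∂π)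
      = ε * (∫ z, Real.log ((π.rnDeriv (ouRefMeasure d κ T) z).toReal) ∂π)
        - ε * (∫ x, Real.log ((μ.rnDeriv (ouInvariantMeasure d κ) x).toReal) ∂μ)
        - ε * (∫ y, Real.log ((ν.rnDeriv (ouInvariantMeasure d κ) y).toReal) ∂ν)
        - ((d : ℝ) * ε / 2) * Real.log (1 - Real.exp (-2 * κ * T))
        + (1 - Real.exp (-κ * T)) * ((∫ x, ‖x‖ ^ 2 ∂μ) + ∫ y, ‖y‖ ^ 2 ∂ν) :=
  eot_ou_schroedinger_identity_general d κ ε T hκ hT0 hT μ ν hμ2 hν2 hμac hνac hμent hνent π hπ1 hπ2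
    hπac hπent
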